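/- Let n be a positive natural number and let A, B be real n×n matrices such that B is an additive combination of a scalar and a constant matrix, i.e., B = c·𝟙_{n×n} + s·I_n for some real numbers c and s. Then ρ_n(A·B) = ρ_n(A)·ρ_n(B) = ρ_n(B·A). -/

import Mathlib

open Matrix BigOperators

/-- The matrix valuation ρ_m: sum of all entries divided by m. -/
noncomputable def rho {p q : ℕ} (m : ℕ) (A : Matrix (Fin p) (Fin q) ℝ) : ℝ :=
  (∑ i, ∑ j, A i j) / (m : ℝ)

/-- The all-ones matrix. -/
def allOnes (p q : ℕ) : Matrix (Fin p) (Fin q) ℝ := fun _ _ => 1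

/-! Right and left multiplication by `c • 𝟙 + s • I` scale the entry sum by the common row and
column sum `c * n + s` of that matrix, and so does `ρ_n`; for `n ≠ 0` this factor is `ρ_n` of the
matrix itself, because `ρ_n I = 1`. -/

section

variable {p q r : ℕ} (m : ℕ)

lemma rho_add (A B : Matrix (Fin p) (Fin q) ℝ) : rho m (A + B) = rho m A + rho m B := by
  simp only [rho, Matrix.add_apply, Finset.sum_add_distrib, add_div]

lemma rho_smul (c : ℝ) (A : Matrix (Fin p) (Fin q) ℝ) : rho m (c • A) = c * rho m A := by
  simp only [rho, Matrix.smul_apply, smul_eq_mul, ← Finset.mul_sum, mul_div_assoc]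

lemma rho_mul_allOnes (A : Matrix (Fin p) (Fin q) ℝ) :
    rho m (A * allOnes q r) = r * rho m A := by
  simp only [rho, mul_apply, allOnes, mul_one, Finset.sum_const, Finset.card_univ,
    Fintype.card_fin, nsmul_eq_mul, ← Finset.mul_sum, mul_div_assoc]

lemma rho_allOnes_mul (A : Matrix (Fin q) (Fin r) ℝ) :
    rho m (allOnes p q * A) = p * rho m A := by
  simp only [rho, mul_apply, allOnes, one_mul, Finset.sum_const, Finset.card_univ,
    Fintype.card_fin, nsmul_eq_mul, mul_div_assoc]
  rw [Finset.sum_comm]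

lemma rho_one_self {n : ℕ} (hn : n ≠ 0) : rho n (1 : Matrix (Fin n) (Fin n) ℝ) = 1 := by
  simp [rho, one_apply, hn]

lemma rho_mul_smul_allOnes_add_smul_one {n : ℕ} (A : Matrix (Fin p) (Fin n) ℝ) (c s : ℝ) :
    rho m (A * (c • allOnes n n + s • 1)) = (c * n + s) * rho m A := by
  rw [Matrix.mul_add, Matrix.mul_smul, Matrix.mul_smul, Matrix.mul_one, rho_add, rho_smul,
    rho_smul, rho_mul_allOnes]
  ring

lemma rho_smul_allOnes_add_smul_one_mul {n : ℕ} (A : Matrix (Fin n) (Fin q) ℝ) (c s : ℝ) :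
    rho m ((c • allOnes n n + s • 1) * A) = (c * n + s) * rho m A := by
  rw [Matrix.add_mul, Matrix.smul_mul, Matrix.smul_mul, Matrix.one_mul, rho_add, rho_smul,
    rho_smul, rho_allOnes_mul]
  ring

end

theorem stmt_4 (n : ℕ) (hn : 0 < n)
    (A B : Matrix (Fin n) (Fin n) ℝ)
    (hB : ∃ c s : ℝ, B = c • allOnes n n + s • (1 : Matrix (Fin n) (Fin n) ℝ)) :
    rho n (A * B) = rho n A * rho n B ∧ rho n A * rho n B = rho n (B * A) := by
  obtain ⟨c, s, rfl⟩ := hB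
  have hρB : rho n (c • allOnes n n + s • (1 : Matrix (Fin n) (Fin n) ℝ)) = c * n + s := by
    simpa only [Matrix.one_mul, rho_one_self hn.ne', mul_one] using
      rho_mul_smul_allOnes_add_smul_one n (1 : Matrix (Fin n) (Fin n) ℝ) c s
  rw [hρB, rho_mul_smul_allOnes_add_smul_one, rho_smul_allOnes_add_smul_one_mul]
  exact ⟨mul_comm _ _, mul_comm _ _⟩
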